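/- The h-transform of L^{(m)} by h(x) = (1−‖x‖²)^{−(m−1−d)/2} is L^{(2d+2−m)}: for all smooth f on the open unit ball of ℝ^d, (1/h)·L^{(m)}(hf) − d(m−d−1)·f = L^{(2d+2−m)}(f). -/

import Mathlib

open Finset

lemma sum_sq_update' {d : ℕ} (x : Fin d → ℝ) (i : Fin d) (t : ℝ) :
    ∑ j, (Function.update x i t j) ^ 2 = t ^ 2 - x i ^ 2 + ∑ j, x j ^ 2 := by
  have h1 : ∀ j, (Function.update x i t j) ^ 2 = Function.update (fun k => x k ^ 2) i (t ^ 2) j := by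
    intro j
    rcases eq_or_ne j i with rfl | hj
    · simp
    · simp [Function.update_of_ne hj]
  simp only [h1]
  rw [Finset.sum_update_of_mem (Finset.mem_univ i),
    Finset.sum_sdiff_eq_sub (Finset.singleton_subset_iff.2 (Finset.mem_univ i)),
    Finset.sum_singleton]
  ring

lemma hasDerivAt_comp_update' {d : ℕ} {f : (Fin d → ℝ) → ℝ} {x : Fin d → ℝ}
    {L : (Fin d → ℝ) →L[ℝ] ℝ} (hf : HasFDerivAt f L x) (i : Fin d) :
    HasDerivAt (fun t => f (Function.update x i t)) (L (Pi.single i 1)) (x i) := by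
  have hc := hasDerivAt_update x i (x i)
  have hf' : HasFDerivAt f L (Function.update x i (x i)) := by
    rwa [Function.update_eq_self]
  exact hf'.comp_hasDerivAt (x i) hc

/-- The `h`-transform of `L^{(m)}` by `h(x) = (1-‖x‖²)^(-(m-1-d)/2)` on the unit ball
of `ℝ^d` is `L^{(2d+2-m)}`. -/
theorem ball_h_transform
    (d : ℕ) (hd : 1 ≤ d) (m : ℝ)
    (D : Fin d → ((Fin d → ℝ) → ℝ) → (Fin d → ℝ) → ℝ)
    (hD : ∀ i (f : (Fin d → ℝ) → ℝ) (x : Fin d → ℝ),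
      D i f x = deriv (fun t => f (Function.update x i t)) (x i))
    (L : ℝ → ((Fin d → ℝ) → ℝ) → (Fin d → ℝ) → ℝ)
    (hL : ∀ (p : ℝ) (f : (Fin d → ℝ) → ℝ) (x : Fin d → ℝ),
      L p f x = (∑ i, ∑ j, ((if i = j then (1 : ℝ) else 0) - x i * x j) * D i (D j f) x)
        - p * ∑ i, x i * D i f x)
    (h : (Fin d → ℝ) → ℝ)
    (hh : ∀ x : Fin d → ℝ, h x = (1 - ∑ i, x i ^ 2) ^ (-(m - 1 - d) / 2))
    (heig : ∀ x : Fin d → ℝ, (∑ i, x i ^ 2) < 1 →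
      L m h x = (d : ℝ) * (m - d - 1) * h x)
    (f : (Fin d → ℝ) → ℝ)
    (hf : ContDiffOn ℝ (⊤ : ℕ∞) f {x : Fin d → ℝ | (∑ i, x i ^ 2) < 1}) :
    ∀ x : Fin d → ℝ, (∑ i, x i ^ 2) < 1 →
      (1 / h x) * L m (fun y => h y * f y) x - (d : ℝ) * (m - d - 1) * f x
        = L (2 * d + 2 - m) f x := by
  -- the set is open
  have hU : IsOpen {y : Fin d → ℝ | (∑ i, y i ^ 2) < 1} :=
    isOpen_lt (by fun_prop) continuous_const
  -- differentiability of f at points of the ball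
  have hfd : ∀ y : Fin d → ℝ, (∑ k, y k ^ 2) < 1 → DifferentiableAt ℝ f y := fun y hy =>
    (hf.contDiffAt (hU.mem_nhds hy)).differentiableAt (by simp)
  -- derivative of h along coordinate lines
  have hline : ∀ (y : Fin d → ℝ), (∑ k, y k ^ 2) < 1 → ∀ j,
      HasDerivAt (fun t => h (Function.update y j t))
        ((m - 1 - (d:ℝ)) * y j * (1 - ∑ k, y k ^ 2) ^ (-(m - 1 - (d:ℝ)) / 2 - 1)) (y j) := by
    intro y hy j
    have hgy : (0:ℝ) < 1 - ∑ k, y k ^ 2 := by linarith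
    have hfun : (fun t => h (Function.update y j t))
        = fun t : ℝ => (1 - (∑ k, y k ^ 2) + y j ^ 2 - t ^ 2) ^ (-(m - 1 - (d:ℝ)) / 2) := by
      funext t
      rw [hh, sum_sq_update']
      congr 1
      ring
    rw [hfun]
    have hb : HasDerivAt (fun t : ℝ => 1 - (∑ k, y k ^ 2) + y j ^ 2 - t ^ 2)
        (-(2 * y j)) (y j) := by
      simpa using (hasDerivAt_pow 2 (y j)).const_sub (1 - (∑ k, y k ^ 2) + y j ^ 2)
    have hval : (1:ℝ) - (∑ k, y k ^ 2) + y j ^ 2 - (y j) ^ 2 = 1 - ∑ k, y k ^ 2 := by ring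
    have H := hb.rpow_const (p := -(m - 1 - (d:ℝ)) / 2) (Or.inl (by rw [hval]; exact ne_of_gt hgy))
    rw [hval] at H
    convert H using 1
    ring
  -- value of D j h on the ball
  have hDh : ∀ y : Fin d → ℝ, (∑ k, y k ^ 2) < 1 → ∀ j,
      D j h y = (m - 1 - (d:ℝ)) * y j * (1 - ∑ k, y k ^ 2) ^ (-(m - 1 - (d:ℝ)) / 2 - 1) :=
    fun y hy j => by rw [hD]; exact (hline y hy j).deriv
  intro x hx
  have hg : (0:ℝ) < 1 - ∑ k, x k ^ 2 := by linarith
  have hgne : (1:ℝ) - ∑ k, x k ^ 2 ≠ 0 := ne_of_gt hg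
  have hne : h x ≠ 0 := by rw [hh]; exact ne_of_gt (Real.rpow_pos_of_pos hg _)
  -- D i h x in terms of h x
  have hDhx : ∀ i, D i h x = (m - 1 - (d:ℝ)) * x i * (h x / (1 - ∑ k, x k ^ 2)) := by
    intro i
    rw [hDh x hx i, hh, Real.rpow_sub hg, Real.rpow_one]
  -- eventually in the ball along coordinate lines
  have hev : ∀ i, ∀ᶠ t in nhds (x i), ∑ k, (Function.update x i t k) ^ 2 < 1 := by
    intro i
    have hc : ContinuousAt (fun t : ℝ => ∑ k, (Function.update x i t k) ^ 2) (x i) := by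
      simp only [sum_sq_update']
      fun_prop
    have h0 : ∑ k, (Function.update x i (x i) k) ^ 2 < 1 := by
      rw [Function.update_eq_self]; exact hx
    exact hc.eventually_lt continuousAt_const h0
  -- first product rule
  have P1 : ∀ y : Fin d → ℝ, (∑ k, y k ^ 2) < 1 → ∀ j,
      D j (fun y => h y * f y) y = D j h y * f y + h y * D j f y := by
    intro y hy j
    have Hh := hline y hy j
    have Hf := hasDerivAt_comp_update' (hfd y hy).hasFDerivAt j
    have Hm := Hh.mul Hf
    simp only [hD]
    rw [show (fun t => h (Function.update y j t) * f (Function.update y j t)) = (fun t => h (Function.update y j t)) * (fun t => f (Function.update y j t)) from rfl, Hm.deriv, Hh.deriv, Hf.deriv]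
    simp [Function.update_eq_self]
  -- differentiability of the four factors along line i
  have hA2 : ∀ i, DifferentiableAt ℝ (fun t => f (Function.update x i t)) (x i) :=
    fun i => (hasDerivAt_comp_update' (hfd x hx).hasFDerivAt i).differentiableAt
  have hA3 : ∀ i, DifferentiableAt ℝ (fun t => h (Function.update x i t)) (x i) :=
    fun i => (hline x hx i).differentiableAt
  have hA1 : ∀ i j, DifferentiableAt ℝ (fun t => D j h (Function.update x i t)) (x i) := by
    intro i j
    have heq : (fun t => D j h (Function.update x i t)) =ᶠ[nhds (x i)]
        (fun t => (m - 1 - (d:ℝ)) * (Function.update x i t j)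
          * (1 - ∑ k, (Function.update x i t k) ^ 2) ^ (-(m - 1 - (d:ℝ)) / 2 - 1)) :=
      (hev i).mono fun t ht => hDh _ ht j
    rw [heq.differentiableAt_iff]
    have h1 : DifferentiableAt ℝ (fun t : ℝ => Function.update x i t j) (x i) := by
      rcases eq_or_ne j i with rfl | hj
      · simp only [Function.update_self]
        exact differentiableAt_fun_id
      · simp only [Function.update_of_ne hj]
        exact differentiableAt_const _
    have hfun2 : (fun t : ℝ => 1 - ∑ k, (Function.update x i t k) ^ 2)
        = fun t : ℝ => (1 + x i ^ 2 - ∑ k, x k ^ 2) - t ^ 2 := by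
      funext t; rw [sum_sq_update']; ring
    have hb : HasDerivAt (fun t : ℝ => 1 - ∑ k, (Function.update x i t k) ^ 2)
        (-(2 * x i)) (x i) := by
      rw [hfun2]
      simpa using (hasDerivAt_pow 2 (x i)).const_sub (1 + x i ^ 2 - ∑ k, x k ^ 2)
    have hval : (1:ℝ) - ∑ k, (Function.update x i (x i) k) ^ 2 = 1 - ∑ k, x k ^ 2 := by
      rw [Function.update_eq_self]
    have h2 : DifferentiableAt ℝ
        (fun t : ℝ => (1 - ∑ k, (Function.update x i t k) ^ 2) ^ (-(m - 1 - (d:ℝ)) / 2 - 1))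
        (x i) :=
      (hb.rpow_const (Or.inl (by rw [hval]; exact hgne))).differentiableAt
    exact ((differentiableAt_const _).mul h1).mul h2
  have hA4 : ∀ i j, DifferentiableAt ℝ (fun t => D j f (Function.update x i t)) (x i) := by
    intro i j
    have heq : (fun t => D j f (Function.update x i t)) =ᶠ[nhds (x i)]
        (fun t => fderiv ℝ f (Function.update x i t) (Pi.single j 1)) :=
      (hev i).mono fun t ht => by
        show D j f (Function.update x i t) = fderiv ℝ f (Function.update x i t) (Pi.single j 1)
        rw [hD]; exact (hasDerivAt_comp_update' (hfd _ ht).hasFDerivAt j).deriv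
    rw [heq.differentiableAt_iff]
    have hG : DifferentiableAt ℝ (fun y : Fin d → ℝ => fderiv ℝ f y (Pi.single j 1)) x := by
      have h1 : ContDiffOn ℝ (⊤ : ℕ∞) (fderiv ℝ f) {y : Fin d → ℝ | (∑ i, y i ^ 2) < 1} :=
        hf.fderiv_of_isOpen hU (by simp)
      have h2 := (h1.differentiableOn (by simp)).differentiableAt (hU.mem_nhds hx)
      exact h2.clm_apply (differentiableAt_const _)
    have hu : DifferentiableAt ℝ (fun t : ℝ => Function.update x i t) (x i) :=
      (hasDerivAt_update x i (x i)).differentiableAt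
    have hG' : DifferentiableAt ℝ (fun y : Fin d → ℝ => fderiv ℝ f y (Pi.single j 1))
        (Function.update x i (x i)) := by rw [Function.update_eq_self]; exact hG
    exact hG'.comp (x i) hu
  -- second product rule
  have P2x : ∀ i j, D i (D j (fun y => h y * f y)) x
      = D i (D j h) x * f x + D j h x * D i f x + D i h x * D j f x + h x * D i (D j f) x := by
    intro i j
    have hev' : (fun t => D j (fun y => h y * f y) (Function.update x i t)) =ᶠ[nhds (x i)]
        (fun t => D j h (Function.update x i t) * f (Function.update x i t)
          + h (Function.update x i t) * D j f (Function.update x i t)) :=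
      (hev i).mono fun t ht => P1 _ ht j
    rw [hD i (D j (fun y => h y * f y)) x]
    rw [hev'.deriv_eq]
    rw [deriv_fun_add ((hA1 i j).fun_mul (hA2 i)) ((hA3 i).fun_mul (hA4 i j))]
    rw [deriv_fun_mul (hA1 i j) (hA2 i), deriv_fun_mul (hA3 i) (hA4 i j)]
    rw [hD i (D j h) x, hD i f x, hD i h x, hD i (D j f) x]
    simp only [Function.update_eq_self]
    ring
  have P1x : ∀ j, D j (fun y => h y * f y) x = D j h x * f x + h x * D j f x :=
    fun j => P1 x hx j
  -- sum manipulations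
  have hsplit : (∑ i, ∑ j, ((if i = j then (1:ℝ) else 0) - x i * x j)
        * (D i (D j h) x * f x + D j h x * D i f x + D i h x * D j f x + h x * D i (D j f) x))
      = (∑ i, ∑ j, ((if i = j then (1:ℝ) else 0) - x i * x j) * D i (D j h) x) * f x
        + (∑ i, ∑ j, ((if i = j then (1:ℝ) else 0) - x i * x j) * (D j h x * D i f x))
        + (∑ i, ∑ j, ((if i = j then (1:ℝ) else 0) - x i * x j) * (D i h x * D j f x))
        + h x * (∑ i, ∑ j, ((if i = j then (1:ℝ) else 0) - x i * x j) * D i (D j f) x) := by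
    rw [Finset.sum_mul, Finset.mul_sum, ← Finset.sum_add_distrib, ← Finset.sum_add_distrib,
      ← Finset.sum_add_distrib]
    refine Finset.sum_congr rfl fun i _ => ?_
    rw [Finset.sum_mul, Finset.mul_sum, ← Finset.sum_add_distrib, ← Finset.sum_add_distrib,
      ← Finset.sum_add_distrib]
    exact Finset.sum_congr rfl fun j _ => by ring
  have hsplit1 : (∑ i, x i * (D i h x * f x + h x * D i f x))
      = (∑ i, x i * D i h x) * f x + h x * ∑ i, x i * D i f x := by
    rw [Finset.sum_mul, Finset.mul_sum, ← Finset.sum_add_distrib]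
    exact Finset.sum_congr rfl fun i _ => by ring
  have hinner1 : ∀ i, (∑ j, ((if i = j then (1:ℝ) else 0) - x i * x j) * x j)
      = x i * (1 - ∑ k, x k ^ 2) := by
    intro i
    have hterm : ∀ j, ((if i = j then (1:ℝ) else 0) - x i * x j) * x j
        = (if i = j then x j else 0) - x i * x j ^ 2 := by
      intro j; split_ifs <;> ring
    simp only [hterm]
    rw [Finset.sum_sub_distrib, Finset.sum_ite_eq, if_pos (Finset.mem_univ i), ← Finset.mul_sum]
    ring
  have hinner2 : ∀ i, (∑ j, ((if i = j then (1:ℝ) else 0) - x i * x j) * D j f x)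
      = D i f x - x i * ∑ j, x j * D j f x := by
    intro i
    have hterm : ∀ j, ((if i = j then (1:ℝ) else 0) - x i * x j) * D j f x
        = (if i = j then D j f x else 0) - x i * (x j * D j f x) := by
      intro j; split_ifs <;> ring
    simp only [hterm]
    rw [Finset.sum_sub_distrib, Finset.sum_ite_eq, if_pos (Finset.mem_univ i), ← Finset.mul_sum]
  have hcrossA : (∑ i, ∑ j, ((if i = j then (1:ℝ) else 0) - x i * x j) * (D j h x * D i f x))
      = (m - 1 - (d:ℝ)) * h x * ∑ i, x i * D i f x := by
    have step : ∀ i, (∑ j, ((if i = j then (1:ℝ) else 0) - x i * x j) * (D j h x * D i f x))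
        = (m - 1 - (d:ℝ)) * (h x / (1 - ∑ k, x k ^ 2)) * D i f x
          * (x i * (1 - ∑ k, x k ^ 2)) := by
      intro i
      rw [← hinner1 i, Finset.mul_sum]
      refine Finset.sum_congr rfl fun j _ => ?_
      rw [hDhx j]; ring
    calc (∑ i, ∑ j, ((if i = j then (1:ℝ) else 0) - x i * x j) * (D j h x * D i f x))
        = ∑ i, (m - 1 - (d:ℝ)) * (h x / (1 - ∑ k, x k ^ 2)) * D i f x
            * (x i * (1 - ∑ k, x k ^ 2)) := Finset.sum_congr rfl fun i _ => step i
      _ = ∑ i, (m - 1 - (d:ℝ)) * h x * (x i * D i f x) :=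
          Finset.sum_congr rfl fun i _ => by field_simp
      _ = (m - 1 - (d:ℝ)) * h x * ∑ i, x i * D i f x := by rw [Finset.mul_sum]
  have hcrossB : (∑ i, ∑ j, ((if i = j then (1:ℝ) else 0) - x i * x j) * (D i h x * D j f x))
      = (m - 1 - (d:ℝ)) * h x * ∑ i, x i * D i f x := by
    have step : ∀ i, (∑ j, ((if i = j then (1:ℝ) else 0) - x i * x j) * (D i h x * D j f x))
        = D i h x * (D i f x - x i * ∑ j, x j * D j f x) := by
      intro i
      rw [← hinner2 i, Finset.mul_sum]
      exact Finset.sum_congr rfl fun j _ => by ring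
    calc (∑ i, ∑ j, ((if i = j then (1:ℝ) else 0) - x i * x j) * (D i h x * D j f x))
        = ∑ i, D i h x * (D i f x - x i * ∑ j, x j * D j f x) :=
          Finset.sum_congr rfl fun i _ => step i
      _ = ∑ i, ((m - 1 - (d:ℝ)) * (h x / (1 - ∑ k, x k ^ 2)) * (x i * D i f x)
            - (m - 1 - (d:ℝ)) * (h x / (1 - ∑ k, x k ^ 2)) * (∑ j, x j * D j f x) * x i ^ 2) :=
          Finset.sum_congr rfl fun i _ => by rw [hDhx i]; ring
      _ = (m - 1 - (d:ℝ)) * (h x / (1 - ∑ k, x k ^ 2)) * (∑ i, x i * D i f x)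
            - (m - 1 - (d:ℝ)) * (h x / (1 - ∑ k, x k ^ 2)) * (∑ j, x j * D j f x)
              * (∑ i, x i ^ 2) := by
          rw [Finset.sum_sub_distrib, ← Finset.mul_sum, ← Finset.mul_sum]
      _ = (m - 1 - (d:ℝ)) * h x * ∑ i, x i * D i f x := by field_simp
  -- the eigenvalue equation in expanded form
  have heig' := heig x hx
  rw [hL] at heig'
  -- the key identity
  have key : L m (fun y => h y * f y) x
      = (d:ℝ) * (m - (d:ℝ) - 1) * h x * f x
        + h x * ((∑ i, ∑ j, ((if i = j then (1:ℝ) else 0) - x i * x j) * D i (D j f) x)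
          - (2 * (d:ℝ) + 2 - m) * ∑ i, x i * D i f x) := by
    rw [hL]
    simp only [P2x, P1x]
    rw [hsplit, hsplit1, hcrossA, hcrossB]
    linear_combination f x * heig'
  rw [key, hL]
  field_simp
  ring
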